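/- arXiv:2501.03527 — 7 statements merged into one kernel-verified Lean document; each statement's English description precedes it below -/
import Mathlib

section
/- For every positive integer n, the sum over all partitions λ of n of the quantity s(λ) = Σ_{i≥1} m_i(λ)(m_i(λ)+1)/2 equals n·p(n), where m_i(λ) is the multiplicity of the part i in λ and p(n) is the number of partitions of n. -/
open Finset

/-- The descending list of parts of a partition. -/
def Nat.Partition.descParts {n : ℕ} (P : n.Partition) : List ℕ :=
  (P.parts.sort (· ≤ ·)).reverse

/-- `n(λ) = Σ_{i≥1} (i-1)λ_i` for a partition `λ` listed in decreasing order. -/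
def Nat.Partition.nval {n : ℕ} (P : n.Partition) : ℕ :=
  (List.zipWith (· * ·) (List.range P.descParts.length) P.descParts).sum

/-- `N(n) = Σ_{λ ⊢ n} n(λ)`. -/
def Nfun (n : ℕ) : ℕ := ∑ P : Nat.Partition n, P.nval

/-- `p(n)`, the number of partitions of `n`. -/
def pfun (n : ℕ) : ℕ := Fintype.card (Nat.Partition n)

/-- number of partitions of n with at least k parts equal to i -/
def cfun (n i k : ℕ) : ℕ :=
  (Finset.univ.filter fun P : Nat.Partition n => k ≤ P.parts.count i).card

lemma msum_le {s t : Multiset ℕ} (h : s ≤ t) : s.sum ≤ t.sum := by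
  obtain ⟨u, rfl⟩ := Multiset.le_iff_exists_add.mp h
  rw [Multiset.sum_add]
  exact Nat.le_add_right _ _

lemma count_zero_parts {n : ℕ} (P : n.Partition) : P.parts.count 0 = 0 := by
  rw [Multiset.count_eq_zero]
  exact fun h => (P.parts_pos h).ne' rfl

lemma count_le_n {n : ℕ} (P : n.Partition) (i : ℕ) : P.parts.count i ≤ n := by
  rcases Nat.eq_zero_or_pos i with rfl | hi
  · rw [count_zero_parts]; exact Nat.zero_le _
  · have h1 : Multiset.replicate (P.parts.count i) i ≤ P.parts :=
      Multiset.le_count_iff_replicate_le.mp le_rfl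
    have h2 : (Multiset.replicate (P.parts.count i) i).sum ≤ P.parts.sum :=
      msum_le h1
    rw [Multiset.sum_replicate, smul_eq_mul, P.parts_sum] at h2
    calc P.parts.count i ≤ P.parts.count i * i := Nat.le_mul_of_pos_right _ hi
    _ ≤ n := h2

/-- The removal equivalence. -/
def remEquiv (n i k : ℕ) (hi : 1 ≤ i) (hk : i * k ≤ n) :
    {P : Nat.Partition n // k ≤ P.parts.count i} ≃ Nat.Partition (n - i * k) where
  toFun := fun ⟨P, hP⟩ =>
    { parts := P.parts - Multiset.replicate k i
      parts_pos := fun {j} hj =>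
        P.parts_pos (Multiset.mem_of_le tsub_le_self hj)
      parts_sum := by
        have hle : Multiset.replicate k i ≤ P.parts :=
          Multiset.le_count_iff_replicate_le.mp hP
        have : (P.parts - Multiset.replicate k i).sum + (Multiset.replicate k i).sum
            = P.parts.sum := by
          rw [← Multiset.sum_add, tsub_add_cancel_of_le hle]
        rw [Multiset.sum_replicate, smul_eq_mul, P.parts_sum] at this
        have hk' : k * i ≤ n := by rw [mul_comm]; exact hk
        rw [mul_comm i k]
        omega }
  invFun := fun Q =>
    ⟨{ parts := Q.parts + Multiset.replicate k i
       parts_pos := fun {j} hj => by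
         rcases Multiset.mem_add.mp hj with h | h
         · exact Q.parts_pos h
         · rw [Multiset.eq_of_mem_replicate h]; omega
       parts_sum := by
         rw [Multiset.sum_add, Q.parts_sum, Multiset.sum_replicate, smul_eq_mul]
         have hk' : k * i ≤ n := by rw [mul_comm]; exact hk
         rw [mul_comm i k]
         omega },
     by simp [Multiset.count_add, Multiset.count_replicate]⟩
  left_inv := fun ⟨P, hP⟩ => by
    have hle : Multiset.replicate k i ≤ P.parts :=
      Multiset.le_count_iff_replicate_le.mp hP
    apply Subtype.ext
    apply Nat.Partition.ext
    simp [tsub_add_cancel_of_le hle]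
  right_inv := fun Q => by
    apply Nat.Partition.ext
    simp

lemma cfun_eq (n i k : ℕ) (hi : 1 ≤ i) (hk : 1 ≤ k) :
    cfun n i k = if i * k ≤ n then pfun (n - i * k) else 0 := by
  split_ifs with h
  · rw [cfun, ← Fintype.card_subtype, pfun]
    exact Fintype.card_congr (remEquiv n i k hi h)
  · rw [cfun, Finset.card_eq_zero, Finset.filter_eq_empty_iff]
    intro P _
    simp only [not_le]
    by_contra hc
    push_neg at hc
    have hle : Multiset.replicate k i ≤ P.parts :=
      Multiset.le_count_iff_replicate_le.mp hc
    have := msum_le hle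
    rw [Multiset.sum_replicate, smul_eq_mul, P.parts_sum, mul_comm] at this
    omega

lemma cfun_symm (n i k : ℕ) (hi : 1 ≤ i) (hk : 1 ≤ k) : cfun n i k = cfun n k i := by
  rw [cfun_eq n i k hi hk, cfun_eq n k i hk hi, mul_comm]

lemma key1 (m n : ℕ) (h : m ≤ n) :
    m * (m + 1) / 2 = ∑ k ∈ Icc 1 n, if k ≤ m then k else 0 := by
  rw [← Finset.sum_filter]
  have hset : (Icc 1 n).filter (· ≤ m) = Icc 1 m := by
    ext x; simp only [mem_filter, mem_Icc]; omega
  rw [hset]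
  have h2 : ∑ k ∈ Icc 1 m, k = ∑ k ∈ range (m + 1), k := by
    apply Finset.sum_subset
    · intro x hx; simp only [mem_Icc] at hx; simp only [mem_range]; omega
    · intro x hx hx'; simp only [mem_range] at hx; simp only [mem_Icc] at hx'; omega
  rw [h2, Finset.sum_range_id]
  simp [mul_comm]

lemma key2 (m n : ℕ) (h : m ≤ n) :
    m = ∑ k ∈ Icc 1 n, if k ≤ m then 1 else 0 := by
  rw [← Finset.sum_filter]
  have hset : (Icc 1 n).filter (· ≤ m) = Icc 1 m := by
    ext x; simp only [mem_filter, mem_Icc]; omega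
  rw [hset]
  simp [Nat.card_Icc]

lemma parts_sum_count {n : ℕ} (P : n.Partition) :
    n = ∑ i ∈ Finset.range (n + 1), P.parts.count i * i := by
  have h1 : (P.parts.map id).sum = ∑ m ∈ P.parts.toFinset, P.parts.count m • id m :=
    Finset.sum_multiset_map_count P.parts id
  rw [Multiset.map_id, P.parts_sum] at h1
  conv_lhs => rw [h1]
  apply Finset.sum_subset
  · intro x hx
    rw [Multiset.mem_toFinset] at hx
    have : x ≤ P.parts.sum := Multiset.single_le_sum (fun _ _ => Nat.zero_le _) _ hx
    rw [P.parts_sum] at this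
    simp only [mem_range]; omega
  · intro x _ hx'
    rw [Multiset.mem_toFinset] at hx'
    simp [Multiset.count_eq_zero_of_notMem hx']

/-- The sum over all partitions `λ` of `n` of
`s(λ) = Σ_i m_i(λ)(m_i(λ)+1)/2` equals `n·p(n)`. -/
theorem sum_s_eq (n : ℕ) (hn : 1 ≤ n) :
    (∑ P : Nat.Partition n, ∑ i ∈ Finset.range (n + 1),
        P.parts.count i * (P.parts.count i + 1) / 2) = n * pfun n := by
  classical
  have hL : (∑ P : Nat.Partition n, ∑ i ∈ Finset.range (n + 1),
        P.parts.count i * (P.parts.count i + 1) / 2)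
      = ∑ i ∈ Finset.range (n + 1), ∑ k ∈ Icc 1 n, k * cfun n i k := by
    rw [Finset.sum_comm]
    refine Finset.sum_congr rfl fun i _ => ?_
    have : ∀ P : Nat.Partition n, P.parts.count i * (P.parts.count i + 1) / 2
        = ∑ k ∈ Icc 1 n, if k ≤ P.parts.count i then k else 0 := fun P =>
      key1 _ _ (count_le_n P i)
    simp_rw [this]
    rw [Finset.sum_comm]
    refine Finset.sum_congr rfl fun k _ => ?_
    rw [Finset.sum_ite, Finset.sum_const, Finset.sum_const_zero, add_zero,
      smul_eq_mul, cfun, mul_comm]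
  have hR : n * pfun n = ∑ i ∈ Finset.range (n + 1), ∑ k ∈ Icc 1 n, i * cfun n i k := by
    have h1 : n * pfun n = ∑ P : Nat.Partition n, n := by
      rw [Finset.sum_const, pfun, smul_eq_mul, mul_comm, Fintype.card]
    rw [h1]
    have h2 : ∀ P : Nat.Partition n, (n : ℕ)
        = ∑ i ∈ Finset.range (n + 1), ∑ k ∈ Icc 1 n, if k ≤ P.parts.count i then i else 0 := by
      intro P
      conv_lhs => rw [parts_sum_count P]
      refine Finset.sum_congr rfl fun i _ => ?_
      have := key2 (P.parts.count i) n (count_le_n P i)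
      calc P.parts.count i * i
          = (∑ k ∈ Icc 1 n, if k ≤ P.parts.count i then 1 else 0) * i := by rw [← this]
        _ = ∑ k ∈ Icc 1 n, (if k ≤ P.parts.count i then 1 else 0) * i := by
            rw [Finset.sum_mul]
        _ = ∑ k ∈ Icc 1 n, if k ≤ P.parts.count i then i else 0 := by
            refine Finset.sum_congr rfl fun k _ => ?_
            split_ifs <;> omega
    rw [Finset.sum_congr rfl fun P _ => h2 P]
    rw [Finset.sum_comm]
    refine Finset.sum_congr rfl fun i _ => ?_
    rw [Finset.sum_comm]
    refine Finset.sum_congr rfl fun k _ => ?_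
    rw [Finset.sum_ite, Finset.sum_const, Finset.sum_const_zero, add_zero,
      smul_eq_mul, cfun, mul_comm]
  rw [hL, hR]
  -- drop i = 0 terms on both sides
  have hzero : ∀ k ∈ Icc 1 n, cfun n 0 k = 0 := by
    intro k hk
    rw [mem_Icc] at hk
    rw [cfun, Finset.card_eq_zero, Finset.filter_eq_empty_iff]
    intro P _
    rw [count_zero_parts]
    omega
  have hsub : Icc 1 n ⊆ Finset.range (n + 1) := by
    intro x hx; rw [mem_Icc] at hx; rw [mem_range]; omega
  have hLs : ∑ i ∈ Finset.range (n + 1), ∑ k ∈ Icc 1 n, k * cfun n i k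
      = ∑ i ∈ Icc 1 n, ∑ k ∈ Icc 1 n, k * cfun n i k := by
    symm
    apply Finset.sum_subset hsub
    intro x hx hx'
    have : x = 0 := by rw [mem_range] at hx; rw [mem_Icc] at hx'; omega
    subst this
    exact Finset.sum_eq_zero fun k hk => by rw [hzero k hk, mul_zero]
  have hRs : ∑ i ∈ Finset.range (n + 1), ∑ k ∈ Icc 1 n, i * cfun n i k
      = ∑ i ∈ Icc 1 n, ∑ k ∈ Icc 1 n, i * cfun n i k := by
    symm
    apply Finset.sum_subset hsub
    intro x hx hx'
    have : x = 0 := by rw [mem_range] at hx; rw [mem_Icc] at hx'; omega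
    subst this
    exact Finset.sum_eq_zero fun k _ => by rw [zero_mul]
  rw [hLs, hRs]
  have hsym : ∀ i ∈ Icc 1 n, ∀ k ∈ Icc 1 n, cfun n i k = cfun n k i := by
    intro i hi k hk
    rw [mem_Icc] at hi hk
    exact cfun_symm n i k hi.1 hk.1
  calc ∑ i ∈ Icc 1 n, ∑ k ∈ Icc 1 n, k * cfun n i k
      = ∑ i ∈ Icc 1 n, ∑ k ∈ Icc 1 n, k * cfun n k i := by
        refine Finset.sum_congr rfl fun i hi => Finset.sum_congr rfl fun k hk => ?_
        rw [hsym i hi k hk]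
    _ = ∑ k ∈ Icc 1 n, ∑ i ∈ Icc 1 n, k * cfun n k i := Finset.sum_comm
    _ = ∑ i ∈ Icc 1 n, ∑ k ∈ Icc 1 n, i * cfun n i k := rfl
end

section
/- Let λ be a partition of n with at least two parts such that the smallest part of λ is at least 2 and the two largest parts are equal (λ_1 = λ_2). Then n(λ) + n(λ') ≤ n(n+1)/4, where n(λ) = Σ_{i≥1} (i−1)λ_i and λ' is the conjugate partition. -/
/-- The list `(λ'_1, λ'_2, …)` of parts of the conjugate partition,
where `λ'_i = #{j : λ_j ≥ i}`. -/
def Nat.Partition.conjParts {n : ℕ} (P : n.Partition) : List ℕ :=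
  (List.range P.parts.sup).map (fun i => Multiset.card (P.parts.filter (fun p => i + 1 ≤ p)))

/-- `n(λ') = Σ_i (i-1)λ'_i`. -/
def Nat.Partition.nvalConj {n : ℕ} (P : n.Partition) : ℕ :=
  (List.zipWith (· * ·) (List.range P.conjParts.length) P.conjParts).sum


/-! Both `λ` and `λ'` are decreasing lists summing to `n`, so Chebyshev's sum inequality against the
indices gives `2 n(λ) + n ≤ l n` and `2 n(λ') + n ≤ λ₁ n`, where `l = λ'₁` is the number of parts.
The two largest parts contribute `2λ₁` to `n` and the other `l - 2` parts at least `2` each, so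
`2 (l + λ₁) ≤ n + 4`; adding the two inequalities yields `4 (n(λ) + n(λ')) ≤ n²`. -/

namespace List

def indexWeightedSum (L : List ℕ) : ℕ :=
  (zipWith (· * ·) (range L.length) L).sum

theorem sum_zipWith_succ_mul : ∀ (r T : List ℕ),
    (zipWith (fun i t => (i + 1) * t) r T).sum
      = (zipWith (· * ·) r T).sum + (T.take r.length).sum
  | [], T => by simp
  | a :: r, [] => by simp
  | a :: r, b :: T => by
    simp only [zipWith_cons_cons, sum_cons, length_cons, take_succ_cons,
      sum_zipWith_succ_mul r T]
    ring

theorem indexWeightedSum_cons (a : ℕ) (T : List ℕ) :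
    (a :: T).indexWeightedSum = T.sum + T.indexWeightedSum := by
  rw [indexWeightedSum, length_cons, range_succ_eq_map, zipWith_cons_cons,
    zipWith_map_left, sum_cons, zero_mul, zero_add, sum_zipWith_succ_mul, length_range,
    take_length, add_comm, indexWeightedSum]

theorem two_mul_indexWeightedSum_add_sum_le :
    ∀ L : List ℕ, L.Pairwise (· ≥ ·) → 2 * L.indexWeightedSum + L.sum ≤ L.length * L.sum
  | [], _ => by simp [indexWeightedSum]
  | a :: T, h => by
    obtain ⟨ha, hT⟩ := pairwise_cons.mp h
    have ih := two_mul_indexWeightedSum_add_sum_le T hT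
    have hsum : T.sum ≤ T.length * a := by simpa using sum_le_card_nsmul T a ha
    rw [indexWeightedSum_cons, sum_cons, length_cons]
    nlinarith

end List

namespace Multiset

theorem sum_range_card_filter_succ_le_eq_sum {m : ℕ} {s : Multiset ℕ} (hs : ∀ p ∈ s, p ≤ m) :
    ∑ k ∈ Finset.range m, card (s.filter (fun p => k + 1 ≤ p)) = s.sum := by
  induction s using Multiset.induction with
  | empty => simp
  | cons a s ih =>
    have hrange : (Finset.range m).filter (fun k => k + 1 ≤ a) = Finset.range a := by
      ext k
      simp only [Finset.mem_filter, Finset.mem_range]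
      have := hs a (mem_cons_self a s)
      omega
    simp only [filter_cons, card_add, apply_ite card, card_singleton, card_zero,
      Finset.sum_add_distrib, Finset.sum_boole, hrange, Finset.card_range, Nat.cast_id,
      ih fun p hp => hs p (mem_cons_of_mem hp), sum_cons]

theorem two_mul_card_add_two_mul_sup_le {s : Multiset ℕ} (hmin : ∀ p ∈ s, 2 ≤ p)
    (htop : 2 ≤ s.count s.sup) : 2 * card s + 2 * s.sup ≤ s.sum + 4 := by
  obtain ⟨t, hs⟩ := le_iff_exists_add.mp (le_count_iff_replicate_le.mp htop)
  have ht : card t * 2 ≤ t.sum := by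
    simpa using card_nsmul_le_sum fun x hx => hmin x (hs ▸ mem_add.mpr (Or.inr hx))
  have hcard : card s = 2 + card t := by rw [hs, card_add, card_replicate]
  have hsum : s.sum = 2 * s.sup + t.sum := by
    nth_rw 1 [hs]
    rw [sum_add, sum_replicate, smul_eq_mul]
  omega

end Multiset

namespace Nat.Partition

variable {n : ℕ} (P : n.Partition)

theorem nval_eq : P.nval = P.descParts.indexWeightedSum := rfl

theorem nvalConj_eq : P.nvalConj = P.conjParts.indexWeightedSum := rfl

theorem descParts_pairwise_ge : P.descParts.Pairwise (· ≥ ·) :=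
  List.pairwise_reverse.mpr (Multiset.pairwise_sort P.parts (· ≤ ·))

theorem sum_descParts : P.descParts.sum = n := by
  rw [descParts, List.sum_reverse, ← Multiset.sum_coe, Multiset.sort_eq, P.parts_sum]

theorem length_descParts : P.descParts.length = Multiset.card P.parts := by
  rw [descParts, List.length_reverse, Multiset.length_sort]

theorem conjParts_pairwise_ge : P.conjParts.Pairwise (· ≥ ·) :=
  List.pairwise_map.mpr <| List.pairwise_lt_range.imp fun hij =>
    Multiset.card_le_card (Multiset.monotone_filter_right _ fun _ hp => by omega)

theorem sum_conjParts : P.conjParts.sum = n := by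
  have h := Multiset.sum_range_card_filter_succ_le_eq_sum
    fun _ hp => Multiset.le_sup (s := P.parts) hp
  rwa [P.parts_sum, Finset.sum_eq_multiset_sum, Finset.range_val, ← Multiset.coe_range,
    Multiset.map_coe, Multiset.sum_coe] at h

theorem length_conjParts : P.conjParts.length = P.parts.sup := by
  rw [conjParts, List.length_map, List.length_range]

theorem two_mul_nval_add_le : 2 * P.nval + n ≤ Multiset.card P.parts * n := by
  simpa only [nval_eq, sum_descParts, length_descParts] using
    P.descParts.two_mul_indexWeightedSum_add_sum_le P.descParts_pairwise_ge

theorem two_mul_nvalConj_add_le : 2 * P.nvalConj + n ≤ P.parts.sup * n := by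
  simpa only [nvalConj_eq, sum_conjParts, length_conjParts] using
    P.conjParts.two_mul_indexWeightedSum_add_sum_le P.conjParts_pairwise_ge

end Nat.Partition

/-- If `λ ⊢ n` has at least two parts, smallest part `≥ 2` and `λ_1 = λ_2`,
then `n(λ) + n(λ') ≤ n(n+1)/4`. -/
theorem nval_add_nvalConj_le (n : ℕ) (P : Nat.Partition n)
    (hmin : ∀ p ∈ P.parts, 2 ≤ p) (htop : 2 ≤ P.parts.count P.parts.sup) :
    4 * (P.nval + P.nvalConj) ≤ n * (n + 1) := by
  have hparts := P.two_mul_nval_add_le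
  have hconj := P.two_mul_nvalConj_add_le
  have hsize := Multiset.two_mul_card_add_two_mul_sup_le hmin htop
  rw [P.parts_sum] at hsize
  nlinarith [Nat.mul_le_mul_right n hsize]
end

section
/- For n ≥ 3, the map ψ sending a partition λ = (λ_1, …, λ_l) of n−2 to (λ_1+1, λ_2, …, λ_l, 1) is a bijection from the set of partitions of n−2 onto the set P11(n) of partitions μ of n with smallest part 1 and μ_1 > μ_2, and it satisfies n(ψ(λ)) = n(λ) + l(λ). -/
namespace Multiset

theorem sup_mem_of_ne_zero {α : Type*} [LinearOrder α] [OrderBot α] {s : Multiset α}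
    (hs : s ≠ 0) : s.sup ∈ s := by
  induction s using Multiset.induction_on with
  | empty => exact absurd rfl hs
  | cons a s ih =>
    rw [sup_cons]
    rcases eq_or_ne s 0 with rfl | hs'
    · simp
    · rcases max_choice a s.sup with h | h <;> rw [h]
      exacts [mem_cons_self a s, mem_cons_of_mem (ih hs')]

theorem reverse_sort_eq_of_pairwise {α : Type*} [LinearOrder α] {s : Multiset α} {l : List α}
    (hl : l.Pairwise (· ≥ ·)) (h : (l : Multiset α) = s) : (s.sort (· ≤ ·)).reverse = l := by
  rw [List.reverse_eq_iff]
  refine List.Perm.eq_of_pairwise' (pairwise_sort _ _) (List.pairwise_reverse.2 hl) ?_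
  rw [← coe_eq_coe, sort_eq, coe_reverse, h]

theorem reverse_sort_eq_sup_cons {α : Type*} [LinearOrder α] [OrderBot α] {s : Multiset α}
    (hs : s ≠ 0) :
    (s.sort (· ≤ ·)).reverse = s.sup :: ((s.erase s.sup).sort (· ≤ ·)).reverse := by
  refine reverse_sort_eq_of_pairwise (List.pairwise_cons.2 ⟨fun x hx ↦ ?_, ?_⟩) ?_
  · exact le_sup (mem_of_mem_erase ((mem_sort _).1 (List.mem_reverse.1 hx)))
  · exact List.pairwise_reverse.2 (pairwise_sort _ _)
  · rw [← cons_coe, coe_reverse, sort_eq, cons_erase (sup_mem_of_ne_zero hs)]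

def psi (s : Multiset ℕ) : Multiset ℕ := (s.sup + 1) ::ₘ 1 ::ₘ s.erase s.sup

theorem sum_psi (s : Multiset ℕ) : s.psi.sum = s.sum + 2 := by
  rcases eq_or_ne s 0 with rfl | hs
  · rfl
  · rw [psi, sum_cons, sum_cons, ← sum_erase (sup_mem_of_ne_zero hs)]
    ring

theorem sup_psi (s : Multiset ℕ) : s.psi.sup = s.sup + 1 := by
  have : (s.erase s.sup).sup ≤ s.sup := sup_mono (subset_of_le (erase_le _ _))
  simp only [psi, sup_cons]
  omega

theorem count_sup_psi {s : Multiset ℕ} (hs : 0 < s.sup) : s.psi.count s.psi.sup = 1 := by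
  have hnotMem : s.sup + 1 ∉ s.erase s.sup := fun h ↦ by
    have := le_sup (mem_of_mem_erase h)
    omega
  rw [sup_psi, psi, count_cons_self, count_cons_of_ne (by omega),
    count_eq_zero_of_notMem hnotMem]

theorem psi_injOn : Set.InjOn psi {s | s ≠ 0} := by
  intro s hs t ht hst
  have hsup : s.sup = t.sup := by
    have := congrArg sup hst
    rwa [sup_psi, sup_psi, add_left_inj] at this
  rw [psi, psi, hsup] at hst
  calc s = s.sup ::ₘ s.erase s.sup := (cons_erase (sup_mem_of_ne_zero hs)).symm
    _ = t.sup ::ₘ t.erase t.sup := by rw [hsup, (cons_inj_right _).1 ((cons_inj_right _).1 hst)]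
    _ = t := cons_erase (sup_mem_of_ne_zero ht)

theorem psi_sub_one_cons_erase_erase {s : Multiset ℕ} (h1 : 1 ∈ s) (hc : s.count s.sup = 1)
    (h2 : 2 ≤ s.sup) : ((s.sup - 1) ::ₘ (s.erase s.sup).erase 1).psi = s := by
  set t := s.sup
  set r := (s.erase t).erase 1
  have ht : t ∈ s := count_pos.1 (by omega)
  have hr : ∀ x ∈ r, x ≤ t - 1 := by
    intro x hx
    have hx' := mem_of_mem_erase hx
    have hxt : x ≠ t := by
      rintro rfl
      rw [← count_pos, count_erase_self] at hx'
      omega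
    have := le_sup (mem_of_mem_erase hx')
    omega
  have hsup : ((t - 1) ::ₘ r).sup = t - 1 := by
    rw [sup_cons, sup_eq_left]
    exact sup_le.2 hr
  rw [psi, hsup, erase_cons_head, Nat.sub_add_cancel (by omega), cons_erase, cons_erase ht]
  exact (mem_erase_of_ne (by omega)).2 h1

theorem reverse_sort_psi {s : Multiset ℕ} (hs : ∀ x ∈ s, 0 < x) :
    (s.psi.sort (· ≤ ·)).reverse
      = (s.sup + 1) :: (((s.erase s.sup).sort (· ≤ ·)).reverse ++ [1]) := by
  set T := ((s.erase s.sup).sort (· ≤ ·)).reverse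
  have hT : (T : Multiset ℕ) = s.erase s.sup := by rw [coe_reverse, sort_eq]
  have hTs : ∀ x ∈ T, 0 < x ∧ x ≤ s.sup := fun x hx ↦ by
    have hx : x ∈ s := mem_of_mem_erase (hT ▸ mem_coe.2 hx)
    exact ⟨hs x hx, le_sup hx⟩
  refine reverse_sort_eq_of_pairwise (List.pairwise_cons.2 ⟨fun x hx ↦ ?_, ?_⟩) ?_
  · rcases List.mem_append.1 hx with hx | hx
    · exact (hTs x hx).2.trans (Nat.le_succ _)
    · rw [List.mem_singleton.1 hx]
      omega
  · refine List.pairwise_append.2 ⟨List.pairwise_reverse.2 (pairwise_sort _ _),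
      List.pairwise_singleton _ _, fun x hx y hy ↦ ?_⟩
    rw [List.mem_singleton.1 hy]
    exact (hTs x hx).1
  · rw [← cons_coe, coe_eq_coe.2 (List.perm_append_singleton 1 T), ← cons_coe, hT]
    rfl

end Multiset

namespace List

def weightedIndexSum (l : List ℕ) : ℕ := (zipWith (· * ·) (range l.length) l).sum

theorem sum_zipWith_mul_range'_succ (k : ℕ) (l : List ℕ) :
    (zipWith (· * ·) (range' (k + 1) l.length) l).sum
      = (zipWith (· * ·) (range' k l.length) l).sum + l.sum := by
  induction l generalizing k with
  | nil => rfl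
  | cons a l ih =>
    simp only [length_cons, range'_succ, zipWith_cons_cons, sum_cons, ih]
    ring

theorem weightedIndexSum_cons (a : ℕ) (l : List ℕ) :
    weightedIndexSum (a :: l) = weightedIndexSum l + l.sum := by
  simp only [weightedIndexSum, range_eq_range', length_cons, range'_succ, zipWith_cons_cons,
    sum_cons, sum_zipWith_mul_range'_succ]
  ring

theorem weightedIndexSum_append_singleton (l : List ℕ) (x : ℕ) :
    weightedIndexSum (l ++ [x]) = weightedIndexSum l + l.length * x := by
  rw [weightedIndexSum, length_append, length_singleton, range_succ,
    zipWith_append length_range, sum_append]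
  simp [weightedIndexSum]

end List

namespace Nat.Partition

variable {k n : ℕ}

def psi (h : k + 2 = n) (P : k.Partition) : n.Partition where
  parts := P.parts.psi
  parts_pos hi := by
    rcases Multiset.mem_cons.1 hi with rfl | hi
    · omega
    rcases Multiset.mem_cons.1 hi with rfl | hi
    · omega
    exact P.parts_pos (Multiset.mem_of_mem_erase hi)
  parts_sum := by rw [Multiset.sum_psi, P.parts_sum, h]

theorem parts_ne_zero (hk : 0 < k) (P : k.Partition) : P.parts ≠ 0 := by
  rintro h
  have := P.parts_sum
  rw [h, Multiset.sum_zero] at this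
  omega

theorem two_le_sup_of_count_sup_eq_one (hn : 2 ≤ n) (Q : n.Partition)
    (hQ : Q.parts.count Q.parts.sup = 1) : 2 ≤ Q.parts.sup := by
  by_contra! hsup
  have hle : Q.parts.sum ≤ Q.parts.card • Q.parts.sup :=
    Multiset.sum_le_card_nsmul _ _ fun _ ↦ Multiset.le_sup
  have hcard : Q.parts.count Q.parts.sup = Q.parts.card :=
    Multiset.count_eq_card.2 fun x hx ↦ by
      have := Q.parts_pos hx
      have := Multiset.le_sup hx
      omega
  rw [Q.parts_sum, ← hcard, hQ, smul_eq_mul] at hle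
  omega

theorem bijOn_psi (h : k + 2 = n) (hk : 0 < k) :
    Set.BijOn (psi h) Set.univ {Q | 1 ∈ Q.parts ∧ Q.parts.count Q.parts.sup = 1} := by
  refine ⟨fun P _ ↦ ⟨?_, ?_⟩, fun P _ P' _ hPP' ↦ ?_, fun Q ⟨hQ1, hQc⟩ ↦ ?_⟩
  · exact Multiset.mem_cons_of_mem (Multiset.mem_cons_self 1 _)
  · have hP := Multiset.sup_mem_of_ne_zero (P.parts_ne_zero hk)
    exact Multiset.count_sup_psi (P.parts_pos hP |>.trans_le (Multiset.le_sup hP))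
  · exact Nat.Partition.ext <| Multiset.psi_injOn (P.parts_ne_zero hk) (P'.parts_ne_zero hk)
      (congrArg parts hPP')
  · have h2 := Q.two_le_sup_of_count_sup_eq_one (by omega) hQc
    have hpsi := Multiset.psi_sub_one_cons_erase_erase hQ1 hQc h2
    refine ⟨⟨(Q.parts.sup - 1) ::ₘ (Q.parts.erase Q.parts.sup).erase 1, fun hi ↦ ?_, ?_⟩,
      Set.mem_univ _, Nat.Partition.ext hpsi⟩
    · rcases Multiset.mem_cons.1 hi with rfl | hi
      · omega
      · exact Q.parts_pos (Multiset.mem_of_mem_erase (Multiset.mem_of_mem_erase hi))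
    · have := Multiset.sum_psi ((Q.parts.sup - 1) ::ₘ (Q.parts.erase Q.parts.sup).erase 1)
      rw [hpsi, Q.parts_sum] at this
      omega

theorem nval_psi (h : k + 2 = n) (hk : 0 < k) (P : k.Partition) :
    (psi h P).nval = P.nval + P.parts.card := by
  have hcard : P.parts.card = ((P.parts.erase P.parts.sup).sort (· ≤ ·)).length + 1 := by
    rw [← Multiset.length_sort (· ≤ ·), ← List.length_reverse,
      Multiset.reverse_sort_eq_sup_cons (P.parts_ne_zero hk), List.length_cons, List.length_reverse]
  change (P.parts.psi.sort (· ≤ ·)).reverse.weightedIndexSum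
    = (P.parts.sort (· ≤ ·)).reverse.weightedIndexSum + _
  rw [hcard, Multiset.reverse_sort_psi fun _ ↦ P.parts_pos,
    Multiset.reverse_sort_eq_sup_cons (P.parts_ne_zero hk), List.weightedIndexSum_cons,
    List.weightedIndexSum_cons, List.weightedIndexSum_append_singleton, List.sum_append,
    List.sum_singleton, List.length_reverse]
  ring

end Nat.Partition

/-- For `n ≥ 3`, the map `ψ` sending a partition `λ = (λ_1, …, λ_l)` of `n-2`
to `(λ_1+1, λ_2, …, λ_l, 1)` is a bijection from the partitions of `n-2` onto
the set `P11(n)` of partitions of `n` with smallest part `1` and `μ_1 > μ_2`,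
and `n(ψ(λ)) = n(λ) + l(λ)`. -/
theorem psi_bijection (n : ℕ) (hn : 3 ≤ n) :
    ∃ ψ : Nat.Partition (n - 2) → Nat.Partition n,
      (∀ P, (ψ P).parts = (P.parts.sup + 1) ::ₘ 1 ::ₘ P.parts.erase P.parts.sup) ∧
      Set.BijOn ψ Set.univ
        {Q : Nat.Partition n | 1 ∈ Q.parts ∧ Q.parts.count Q.parts.sup = 1} ∧
      ∀ P, (ψ P).nval = P.nval + Multiset.card P.parts := by
  have h : n - 2 + 2 = n := Nat.sub_add_cancel (by omega)
  have hk : 0 < n - 2 := by omega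
  exact ⟨Nat.Partition.psi h, fun _ ↦ rfl, Nat.Partition.bijOn_psi h hk,
    Nat.Partition.nval_psi h hk⟩
end

section
/- For n ≥ 4, the sum of l(λ) over all partitions λ of n with λ_1 = λ_2 (the two largest parts equal) is at most (2/3)(n+1) times the number of such partitions. -/
namespace PfAux

/-- Invariant: the parts ≥ 2 other than two copies of the largest part. -/
def gmap {n : ℕ} (P : n.Partition) : Multiset ℕ :=
  Multiset.filter (fun x => 2 ≤ x) ((P.parts.erase P.parts.sup).erase P.parts.sup)

lemma gmap_def {n : ℕ} (P : n.Partition) :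
    gmap P = Multiset.filter (fun x => 2 ≤ x)
      ((P.parts.erase P.parts.sup).erase P.parts.sup) := rfl

/-- The standard form of an element of a fiber. -/
def mkmult (n q : ℕ) (ρ : Multiset ℕ) : Multiset ℕ :=
  q ::ₘ q ::ₘ (ρ + Multiset.replicate (n - ρ.sum - 2 * q) 1)

def mkpart (n q : ℕ) (ρ : Multiset ℕ) (hρ : ∀ x ∈ ρ, 2 ≤ x) (hq : 1 ≤ q)
    (hs : 2 * q + ρ.sum ≤ n) : n.Partition where
  parts := mkmult n q ρ
  parts_pos := by
    intro i hi
    simp only [mkmult, Multiset.mem_cons, Multiset.mem_add] at hi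
    rcases hi with rfl | rfl | hi | hi
    · omega
    · omega
    · have := hρ i hi; omega
    · have := Multiset.eq_of_mem_replicate hi; omega
  parts_sum := by
    simp only [mkmult, Multiset.sum_cons, Multiset.sum_add, Multiset.sum_replicate,
      smul_eq_mul, mul_one]
    omega

lemma mkpart_parts (n q : ℕ) (ρ : Multiset ℕ) (hρ : ∀ x ∈ ρ, 2 ≤ x) (hq : 1 ≤ q)
    (hs : 2 * q + ρ.sum ≤ n) :
    (mkpart n q ρ hρ hq hs).parts
      = q ::ₘ q ::ₘ (ρ + Multiset.replicate (n - ρ.sum - 2 * q) 1) := rfl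

lemma sup_mkpart (n q : ℕ) (ρ : Multiset ℕ) (hρ : ∀ x ∈ ρ, 2 ≤ x) (hq : 1 ≤ q)
    (hs : 2 * q + ρ.sum ≤ n) (hqs : ρ.sup ≤ q) :
    (mkpart n q ρ hρ hq hs).parts.sup = q := by
  apply le_antisymm
  · rw [Multiset.sup_le]
    intro b hb
    rw [mkpart_parts] at hb
    simp only [Multiset.mem_cons, Multiset.mem_add] at hb
    rcases hb with rfl | rfl | hb | hb
    · exact le_refl _
    · exact le_refl _
    · exact le_trans (Multiset.le_sup hb) hqs
    · have := Multiset.eq_of_mem_replicate hb; omega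
  · exact Multiset.le_sup (by rw [mkpart_parts]; exact Multiset.mem_cons_self _ _)

lemma count_mkpart (n q : ℕ) (ρ : Multiset ℕ) (hρ : ∀ x ∈ ρ, 2 ≤ x) (hq : 1 ≤ q)
    (hs : 2 * q + ρ.sum ≤ n) :
    2 ≤ (mkpart n q ρ hρ hq hs).parts.count q := by
  rw [mkpart_parts, Multiset.count_cons_self, Multiset.count_cons_self]
  omega

lemma gmap_mkpart (n q : ℕ) (ρ : Multiset ℕ) (hρ : ∀ x ∈ ρ, 2 ≤ x) (hq : 1 ≤ q)
    (hs : 2 * q + ρ.sum ≤ n) (hqs : ρ.sup ≤ q) :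
    gmap (mkpart n q ρ hρ hq hs) = ρ := by
  rw [gmap_def, sup_mkpart n q ρ hρ hq hs hqs, mkpart_parts,
    Multiset.erase_cons_head, Multiset.erase_cons_head, Multiset.filter_add,
    Multiset.filter_eq_self.mpr hρ, Multiset.filter_eq_nil.mpr, add_zero]
  intro a ha
  have := Multiset.eq_of_mem_replicate ha
  omega

lemma card_mkpart (n q : ℕ) (ρ : Multiset ℕ) (hρ : ∀ x ∈ ρ, 2 ≤ x) (hq : 1 ≤ q)
    (hs : 2 * q + ρ.sum ≤ n) :
    Multiset.card (mkpart n q ρ hρ hq hs).parts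
      = 2 + Multiset.card ρ + (n - ρ.sum - 2 * q) := by
  rw [mkpart_parts]
  simp only [Multiset.card_cons, Multiset.card_add, Multiset.card_replicate]
  omega

lemma char {n : ℕ} (P : n.Partition) (h2 : 2 ≤ P.parts.count P.parts.sup) :
    P.parts = P.parts.sup ::ₘ P.parts.sup ::ₘ
        (gmap P + Multiset.replicate (n - (gmap P).sum - 2 * P.parts.sup) 1) ∧
      max (gmap P).sup 1 ≤ P.parts.sup ∧ 2 * P.parts.sup + (gmap P).sum ≤ n := by
  classical
  set m := P.parts.sup with hm
  have hmem : m ∈ P.parts := by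
    rw [← Multiset.count_pos]; omega
  have hm1 : 1 ≤ m := P.parts_pos hmem
  have hmem2 : m ∈ P.parts.erase m := by
    rw [← Multiset.count_pos, Multiset.count_erase_self]; omega
  have hparts : P.parts = m ::ₘ m ::ₘ (P.parts.erase m).erase m := by
    rw [Multiset.cons_erase hmem2, Multiset.cons_erase hmem]
  have hrsub : ∀ x ∈ (P.parts.erase m).erase m, x ∈ P.parts :=
    fun x hx => Multiset.mem_of_mem_erase (Multiset.mem_of_mem_erase hx)
  set rest := (P.parts.erase m).erase m with hrest
  set j := Multiset.card (Multiset.filter (fun x => ¬ 2 ≤ x) rest) with hj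
  have hones : Multiset.filter (fun x => ¬ 2 ≤ x) rest = Multiset.replicate j 1 := by
    rw [Multiset.eq_replicate]
    refine ⟨rfl, fun b hb => ?_⟩
    have h1 := Multiset.mem_filter.mp hb
    have hb2 := P.parts_pos (hrsub b h1.1)
    have := h1.2
    omega
  have hsplit : gmap P + Multiset.replicate j 1 = rest := by
    rw [← hones, gmap_def, ← hm, ← hrest]
    exact Multiset.filter_add_not _ _
  have hrsum : rest.sum = (gmap P).sum + j := by
    conv_lhs => rw [← hsplit]
    rw [Multiset.sum_add, Multiset.sum_replicate, smul_eq_mul, mul_one]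
  have hsum : m + (m + rest.sum) = n := by
    conv_rhs => rw [← P.parts_sum]
    rw [hparts, Multiset.sum_cons, Multiset.sum_cons]
  refine ⟨?_, ?_, by omega⟩
  · rw [hparts]
    have hjval : j = n - (gmap P).sum - 2 * m := by omega
    rw [hjval] at hsplit
    rw [hsplit]
  · rw [max_le_iff]
    refine ⟨?_, hm1⟩
    rw [Multiset.sup_le]
    intro b hb
    rw [gmap_def, ← hm, ← hrest] at hb
    exact Multiset.le_sup (hrsub b (Multiset.mem_filter.mp hb).1)

end PfAux


open PfAux in
/-- For `n ≥ 4`, the sum of lengths of all partitions of `n` whose two largest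
parts are equal is at most `(2/3)(n+1)` times the number of such partitions. -/
theorem sum_length_P12_P22_le (n : ℕ) (hn : 4 ≤ n) :
    3 * ∑ P ∈ Finset.univ.filter
        (fun P : Nat.Partition n => 2 ≤ P.parts.count P.parts.sup),
        Multiset.card P.parts
      ≤ 2 * (n + 1) * (Finset.univ.filter
        (fun P : Nat.Partition n => 2 ≤ P.parts.count P.parts.sup)).card := by
  classical
  set S := Finset.univ.filter
      (fun P : Nat.Partition n => 2 ≤ P.parts.count P.parts.sup) with hSdef
  have hmaps : ∀ P ∈ S, gmap P ∈ S.image gmap := fun P hP => Finset.mem_image_of_mem _ hP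
  rw [← Finset.sum_fiberwise_of_maps_to hmaps (fun P => Multiset.card P.parts),
    Finset.card_eq_sum_card_fiberwise hmaps, Finset.mul_sum, Finset.mul_sum]
  apply Finset.sum_le_sum
  intro ρ hρmem
  obtain ⟨P0, hP0S, hgP0⟩ := Finset.mem_image.mp hρmem
  have hP0 : 2 ≤ P0.parts.count P0.parts.sup := by
    rw [hSdef, Finset.mem_filter] at hP0S
    exact hP0S.2
  have hρ2 : ∀ x ∈ ρ, 2 ≤ x := by
    rw [← hgP0]
    intro x hx
    rw [gmap_def] at hx
    exact (Multiset.mem_filter.mp hx).2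
  obtain ⟨hch0, hm00, hsum0⟩ := char P0 hP0
  rw [hgP0] at hch0 hm00 hsum0
  -- abbreviations
  set M := (n - ρ.sum) / 2 with hM
  set m0 := max ρ.sup 1 with hm0
  set K := M - m0 + 1 with hK
  have hm0sup : ρ.sup ≤ m0 := le_max_left _ _
  have hm01 : 1 ≤ m0 := le_max_right _ _
  have hm0P0 : m0 ≤ P0.parts.sup := hm00
  have hm0M : m0 ≤ M := by omega
  have hr2 : 2 * Multiset.card ρ ≤ ρ.sum := by
    have := Multiset.card_nsmul_le_sum hρ2
    rw [smul_eq_mul, mul_comm] at this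
    exact this
  have hcase : (ρ.sum = 0 ∧ Multiset.card ρ = 0 ∧ m0 = 1) ∨
      (2 ≤ m0 ∧ 1 ≤ Multiset.card ρ) := by
    rcases eq_or_ne ρ 0 with h | h
    · left
      rw [hm0, h]
      simp
    · right
      obtain ⟨x, hx⟩ := Multiset.exists_mem_of_ne_zero h
      have h2x := hρ2 x hx
      have hxs := Multiset.le_sup hx
      have hcard := Multiset.card_pos.mpr h
      omega
  -- facts for all a in range K
  have hfacts : ∀ a ∈ Finset.range K, 1 ≤ M - a ∧ 2 * (M - a) + ρ.sum ≤ n ∧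
      ρ.sup ≤ M - a := by
    intro a ha
    have ha' := Finset.mem_range.mp ha
    have h1 : m0 ≤ M - a := by omega
    exact ⟨by omega, by omega, le_trans hm0sup h1⟩
  set i : ∀ a ∈ Finset.range K, Nat.Partition n := fun a ha =>
    mkpart n (M - a) ρ hρ2 (hfacts a ha).1 (hfacts a ha).2.1 with hidef
  have hsupi : ∀ a (ha : a ∈ Finset.range K), (i a ha).parts.sup = M - a := fun a ha =>
    sup_mkpart n (M - a) ρ hρ2 (hfacts a ha).1 (hfacts a ha).2.1 (hfacts a ha).2.2
  have hi : ∀ a (ha : a ∈ Finset.range K),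
      i a ha ∈ S.filter (fun P => gmap P = ρ) := by
    intro a ha
    rw [Finset.mem_filter, hSdef, Finset.mem_filter]
    refine ⟨⟨Finset.mem_univ _, ?_⟩,
      gmap_mkpart n (M - a) ρ hρ2 (hfacts a ha).1 (hfacts a ha).2.1 (hfacts a ha).2.2⟩
    rw [hsupi a ha]
    exact count_mkpart n (M - a) ρ hρ2 (hfacts a ha).1 (hfacts a ha).2.1
  have hinj : ∀ a₁ (ha₁ : a₁ ∈ Finset.range K) a₂ (ha₂ : a₂ ∈ Finset.range K),
      i a₁ ha₁ = i a₂ ha₂ → a₁ = a₂ := by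
    intro a₁ ha₁ a₂ ha₂ heq
    have h1 := hsupi a₁ ha₁
    have h2 := hsupi a₂ ha₂
    rw [heq] at h1
    rw [h2] at h1
    have hb1 := Finset.mem_range.mp ha₁
    have hb2 := Finset.mem_range.mp ha₂
    omega
  have hsurj : ∀ P ∈ S.filter (fun P => gmap P = ρ),
      ∃ a, ∃ ha : a ∈ Finset.range K, i a ha = P := by
    intro P hP
    rw [Finset.mem_filter] at hP
    obtain ⟨hPS, hPg⟩ := hP
    have hP2 : 2 ≤ P.parts.count P.parts.sup := by
      rw [hSdef, Finset.mem_filter] at hPS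
      exact hPS.2
    obtain ⟨hch', hm0', hsum'⟩ := char P hP2
    rw [hPg] at hch' hm0' hsum'
    have hsupM : P.parts.sup ≤ M := by omega
    have hm0p : m0 ≤ P.parts.sup := hm0'
    refine ⟨M - P.parts.sup, Finset.mem_range.mpr (by omega), ?_⟩
    apply Nat.Partition.ext
    rw [hidef]
    rw [mkpart_parts]
    rw [show M - (M - P.parts.sup) = P.parts.sup by omega]
    exact hch'.symm
  have hcard : (S.filter (fun P => gmap P = ρ)).card = K := by
    rw [← Finset.card_range K]
    exact (Finset.card_bij i hi hinj hsurj).symm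
  have hsum_eq : ∑ a ∈ Finset.range K, ((2 + Multiset.card ρ + (n - ρ.sum) % 2) + 2 * a)
      = ∑ P ∈ S.filter (fun P => gmap P = ρ), Multiset.card P.parts := by
    refine Finset.sum_bij i hi hinj hsurj ?_
    intro a ha
    rw [hidef, card_mkpart]
    have := Finset.mem_range.mp ha
    omega
  rw [← hsum_eq, hcard]
  have hsplit : ∑ a ∈ Finset.range K, ((2 + Multiset.card ρ + (n - ρ.sum) % 2) + 2 * a)
      = K * (2 + Multiset.card ρ + (n - ρ.sum) % 2) + 2 * ∑ a ∈ Finset.range K, a := by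
    rw [Finset.sum_add_distrib, Finset.sum_const, smul_eq_mul, Finset.mul_sum, Finset.card_range]
  have hgauss : 2 * ∑ a ∈ Finset.range K, a = K * (K - 1) := by
    rw [mul_comm]
    exact Finset.sum_range_id_mul_two K
  rw [hsplit, hgauss]
  have hlin : 3 * (2 + Multiset.card ρ + (n - ρ.sum) % 2) + 3 * (K - 1) ≤ 2 * (n + 1) := by
    omega
  calc 3 * (K * (2 + Multiset.card ρ + (n - ρ.sum) % 2) + K * (K - 1))
      = K * (3 * (2 + Multiset.card ρ + (n - ρ.sum) % 2) + 3 * (K - 1)) := by ring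
    _ ≤ K * (2 * (n + 1)) := Nat.mul_le_mul_left K hlin
    _ = 2 * (n + 1) * K := by ring
end

section
/- For every n ≥ 1, the sum N(n) of n(λ) over all partitions λ of n satisfies N(n) ≤ (1/6)n(n+1)p(n), i.e. 6·N(n) ≤ n(n+1)p(n). -/
/-!
Write `m_a(λ)` for the multiplicity of `a` in `λ ⊢ n`. The three sums
`Σ_{x,y ∈ λ} min x y = 2 n(λ) + n`, `Σ_{x,y ∈ λ} x y = n²` and `Σ_{x ∈ λ} x = n` are sums of
`f a b · m_a m_b` (resp. `f a · m_a`), and `m_a m_b` counts the pairs `j, k ≥ 1` with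
`a^j ∪ b^k ≤ λ`. As the partitions of `n` containing a fixed multiset of size `s` correspond to the
partitions of `n - s`, summing over `λ ⊢ n` turns each of them into `Σ_{s=1}^n c(s) p(n - s)` with
coefficients `v(s)`, `w(s)`, `u(s) = σ(s)` summed over `pairFiber n s`, `singleFiber n s`.
It then suffices that `3 v(s) ≤ w(s) + 4 u(s)`: termwise `3 min a b ≤ a b` unless `a, b ≤ 2`,
and the few terms with `a, b ≤ 2` are paid for by the slack `s² - 3s` of the term `a = b = s`,
`j = k = 1` and by `u(s) ≥ s + 1`.
-/

open Finset

lemma sum_zipWith_mul_range'_succ (l : List ℕ) (k : ℕ) :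
    (List.zipWith (· * ·) (List.range' (k + 1) l.length) l).sum =
      (List.zipWith (· * ·) (List.range' k l.length) l).sum + l.sum := by
  induction l generalizing k with
  | nil => simp
  | cons a t ih =>
    simp only [List.length_cons, List.range'_succ, List.zipWith_cons_cons, List.sum_cons, ih]
    ring

lemma sum_map_sum_map_min_of_pairwise_ge {l : List ℕ} (hl : l.Pairwise (· ≥ ·)) :
    (l.map fun x => (l.map (min x)).sum).sum =
      2 * (List.zipWith (· * ·) (List.range l.length) l).sum + l.sum := by
  induction l with
  | nil => simp
  | cons a t ih =>
    obtain ⟨ha, ht⟩ := List.pairwise_cons.mp hl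
    have hleft : t.map (min a) = t :=
      (List.map_congr_left fun y hy => min_eq_right (ha y hy)).trans t.map_id
    have hright : (t.map fun x => min x a + (t.map (min x)).sum) =
        t.map fun x => x + (t.map (min x)).sum :=
      List.map_congr_left fun x hx => by rw [min_eq_left (ha x hx)]
    simp only [List.map_cons, List.sum_cons, min_self, hleft, hright, List.sum_map_add,
      List.map_id', ih ht, List.length_cons, List.range_eq_range', List.range'_succ,
      List.zipWith_cons_cons, zero_mul, zero_add, sum_zipWith_mul_range'_succ]
    ring

/-- `(a, j) ∈ grid n` encodes the multiset `a^j`: "the part `a` occurs at least `j` times". -/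
def grid (n : ℕ) : Finset (ℕ × ℕ) := Icc 1 n ×ˢ Icc 1 n

lemma mem_grid {n : ℕ} {p : ℕ × ℕ} :
    p ∈ grid n ↔ (1 ≤ p.1 ∧ p.1 ≤ n) ∧ (1 ≤ p.2 ∧ p.2 ≤ n) := by
  simp [grid]

lemma card_Icc_one_filter_le {n c : ℕ} (hc : c ≤ n) : #{j ∈ Icc 1 n | j ≤ c} = c := by
  rw [show {j ∈ Icc 1 n | j ≤ c} = Icc 1 c by ext; simp only [mem_filter, mem_Icc]; omega]
  simp

def replicateUnion (x : (ℕ × ℕ) × (ℕ × ℕ)) : Multiset ℕ :=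
  Multiset.replicate x.1.2 x.1.1 ∪ Multiset.replicate x.2.2 x.2.1

lemma replicateUnion_swap (x : (ℕ × ℕ) × (ℕ × ℕ)) : replicateUnion x.swap = replicateUnion x :=
  Multiset.union_comm _ _

lemma sum_replicateUnion (x : (ℕ × ℕ) × (ℕ × ℕ)) :
    (replicateUnion x).sum =
      if x.1.1 = x.2.1 then max x.1.2 x.2.2 * x.1.1 else x.1.2 * x.1.1 + x.2.2 * x.2.1 := by
  obtain ⟨⟨a, j⟩, ⟨b, k⟩⟩ := x
  dsimp only
  split_ifs with hab
  · obtain rfl : a = b := hab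
    rw [show replicateUnion ((a, j), (a, k)) = Multiset.replicate (max j k) a by
      ext c; simp only [replicateUnion, Multiset.count_union, Multiset.count_replicate]
      split_ifs <;> simp]
    simp
  · rw [show replicateUnion ((a, j), (b, k)) =
        Multiset.replicate j a + Multiset.replicate k b by
      ext c; simp only [replicateUnion, Multiset.count_union, Multiset.count_add,
        Multiset.count_replicate]
      split_ifs <;> omega]
    simp

def singleFiber (n s : ℕ) : Finset (ℕ × ℕ) :=
  {p ∈ grid n | (Multiset.replicate p.2 p.1).sum = s}

def pairFiber (n s : ℕ) : Finset ((ℕ × ℕ) × (ℕ × ℕ)) :=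
  {x ∈ grid n ×ˢ grid n | (replicateUnion x).sum = s}

lemma mem_singleFiber {n s : ℕ} {p : ℕ × ℕ} :
    p ∈ singleFiber n s ↔ p ∈ grid n ∧ p.2 * p.1 = s := by
  rw [singleFiber, mem_filter, Multiset.sum_replicate, smul_eq_mul]

lemma mem_pairFiber {n s : ℕ} {x : (ℕ × ℕ) × (ℕ × ℕ)} :
    x ∈ pairFiber n s ↔ x.1 ∈ grid n ∧ x.2 ∈ grid n ∧
      (if x.1.1 = x.2.1 then max x.1.2 x.2.2 * x.1.1 else x.1.2 * x.1.1 + x.2.2 * x.2.1) = s := by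
  rw [pairFiber, mem_filter, mem_product, sum_replicateUnion, and_assoc]

namespace Nat.Partition

variable {n : ℕ}

lemma coe_descParts (P : n.Partition) : (P.descParts : Multiset ℕ) = P.parts := by
  rw [descParts, Multiset.coe_reverse, Multiset.sort_eq]

lemma sum_map_sum_map_min_parts (P : n.Partition) :
    (P.parts.map fun x => (P.parts.map (min x)).sum).sum = 2 * P.nval + n := by
  have hsorted : P.descParts.Pairwise (· ≥ ·) :=
    List.pairwise_reverse.mpr (Multiset.pairwise_sort P.parts (· ≤ ·))
  have hsum : P.descParts.sum = n := by
    simpa [P.parts_sum] using congrArg Multiset.sum P.coe_descParts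
  rw [← P.coe_descParts]
  simp only [Multiset.map_coe, Multiset.sum_coe]
  rw [sum_map_sum_map_min_of_pairwise_ge hsorted, nval, hsum]

lemma sum_map_sum_map_mul_parts (P : n.Partition) :
    (P.parts.map fun x => (P.parts.map (x * ·)).sum).sum = n * n := by
  have h (x : ℕ) : (P.parts.map (x * ·)).sum = x * n := by
    simpa [P.parts_sum] using Multiset.sum_map_mul_left (a := x) (s := P.parts) (f := id)
  simpa [h, P.parts_sum] using Multiset.sum_map_mul_right (a := n) (s := P.parts) (f := id)

lemma count_parts_le (P : n.Partition) (a : ℕ) : P.parts.count a ≤ n :=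
  calc P.parts.count a ≤ Multiset.card P.parts := Multiset.count_le_card _ _
    _ ≤ P.parts.sum := by
      simpa using Multiset.card_nsmul_le_sum (a := 1) (fun x hx => P.parts_pos hx)
    _ = n := P.parts_sum

lemma sum_map_parts_eq_sum_grid (P : n.Partition) (f : ℕ → ℕ) :
    (P.parts.map f).sum =
      ∑ p ∈ grid n, if Multiset.replicate p.2 p.1 ≤ P.parts then f p.1 else 0 := by
  classical
  have hsupp : P.parts.toFinset ⊆ Icc 1 n := fun a ha => by
    rw [Multiset.mem_toFinset] at ha
    exact mem_Icc.mpr ⟨P.parts_pos ha, P.le_of_mem_parts ha⟩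
  rw [sum_multiset_map_count, sum_subset hsupp fun a _ ha => by
    simp [Multiset.count_eq_zero.mpr (by simpa using ha)], grid, sum_product]
  refine sum_congr rfl fun a _ => ?_
  simp_rw [← Multiset.le_count_iff_replicate_le, ← sum_filter, sum_const,
    card_Icc_one_filter_le (P.count_parts_le a)]

lemma sum_map_sum_map_parts_eq_sum_grid (P : n.Partition) (f : ℕ → ℕ → ℕ) :
    (P.parts.map fun x => (P.parts.map (f x)).sum).sum =
      ∑ x ∈ grid n ×ˢ grid n, if replicateUnion x ≤ P.parts then f x.1.1 x.2.1 else 0 := by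
  rw [P.sum_map_parts_eq_sum_grid, sum_product]
  refine sum_congr rfl fun p _ => ?_
  rw [P.sum_map_parts_eq_sum_grid]
  by_cases h : Multiset.replicate p.2 p.1 ≤ P.parts <;> simp [replicateUnion, h]

lemma sum_sub_add_sum (P : n.Partition) {r : Multiset ℕ} (h : r ≤ P.parts) :
    (P.parts - r).sum + r.sum = n := by
  rw [← Multiset.sum_add, tsub_add_cancel_of_le h, P.parts_sum]

def subMultisetEquiv {r : Multiset ℕ} (hr : ∀ i ∈ r, 0 < i) (hn : r.sum ≤ n) :
    {P : n.Partition // r ≤ P.parts} ≃ (n - r.sum).Partition where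
  toFun P := ⟨P.1.parts - r,
    fun hi => P.1.parts_pos (Multiset.mem_of_le (Multiset.sub_le_self _ _) hi),
    by have := P.1.sum_sub_add_sum P.2; omega⟩
  invFun Q := ⟨⟨Q.parts + r, fun hi => (Multiset.mem_add.mp hi).elim Q.parts_pos (hr _),
    by rw [Multiset.sum_add, Q.parts_sum]; omega⟩, Multiset.le_add_left _ _⟩
  left_inv P := Subtype.ext <| Partition.ext <| tsub_add_cancel_of_le P.2
  right_inv Q := Partition.ext <| add_tsub_cancel_right _ _

lemma card_filter_le_parts (n : ℕ) {r : Multiset ℕ} (hr : ∀ i ∈ r, 0 < i) :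
    #{P : n.Partition | r ≤ P.parts} =
      if r.sum ≤ n then Fintype.card (n - r.sum).Partition else 0 := by
  split_ifs with hn
  · rw [← Fintype.card_congr (subMultisetEquiv hr hn), Fintype.card_subtype]
  · refine Finset.card_eq_zero.mpr (filter_eq_empty_iff.mpr fun P _ h => hn ?_)
    have := P.sum_sub_add_sum h
    omega

lemma sum_sum_ite_le_parts {ι : Type*} (n : ℕ) (T : Finset ι) (r : ι → Multiset ℕ)
    (hr : ∀ x ∈ T, ∀ i ∈ r x, 0 < i) (hr_sum : ∀ x ∈ T, 0 < (r x).sum) (g : ι → ℕ) :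
    ∑ P : n.Partition, ∑ x ∈ T, (if r x ≤ P.parts then g x else 0) =
      ∑ s ∈ Icc 1 n, (∑ x ∈ T with (r x).sum = s, g x) * Fintype.card (n - s).Partition := by
  have hcount : ∀ x ∈ T, ∑ P : n.Partition, (if r x ≤ P.parts then g x else 0) =
      if (r x).sum ≤ n then g x * Fintype.card (n - (r x).sum).Partition else 0 := fun x hx => by
    rw [← sum_filter, sum_const, card_filter_le_parts n (hr x hx), smul_eq_mul]
    split_ifs <;> simp [mul_comm]
  rw [sum_comm, sum_congr rfl hcount, ← sum_filter,
    ← sum_fiberwise_of_maps_to (t := Icc 1 n) (g := fun x => (r x).sum)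
      fun x hx => mem_Icc.mpr ⟨hr_sum x (mem_filter.mp hx).1, (mem_filter.mp hx).2⟩]
  refine sum_congr rfl fun s hs => ?_
  rw [filter_filter, sum_mul]
  refine sum_congr (filter_congr fun x _ => ⟨And.right, fun h => ⟨h ▸ (mem_Icc.mp hs).2, h⟩⟩)
    fun x hx => ?_
  rw [(mem_filter.mp hx).2]

lemma sum_sum_map_parts (n : ℕ) (f : ℕ → ℕ) :
    ∑ P : n.Partition, (P.parts.map f).sum =
      ∑ s ∈ Icc 1 n, (∑ p ∈ singleFiber n s, f p.1) * Fintype.card (n - s).Partition := by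
  simp_rw [sum_map_parts_eq_sum_grid]
  refine sum_sum_ite_le_parts n _ _ (fun p hp i hi => ?_) (fun p hp => ?_) _
  · rw [Multiset.eq_of_mem_replicate hi]
    exact (mem_grid.mp hp).1.1
  · rw [mem_grid] at hp
    rw [Multiset.sum_replicate, smul_eq_mul]
    exact Nat.mul_pos (by omega) (by omega)

lemma sum_sum_map_sum_map_parts (n : ℕ) (f : ℕ → ℕ → ℕ) :
    ∑ P : n.Partition, (P.parts.map fun x => (P.parts.map (f x)).sum).sum =
      ∑ s ∈ Icc 1 n, (∑ x ∈ pairFiber n s, f x.1.1 x.2.1) * Fintype.card (n - s).Partition := by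
  simp_rw [sum_map_sum_map_parts_eq_sum_grid]
  refine sum_sum_ite_le_parts n _ replicateUnion (fun x hx i hi => ?_) (fun x hx => ?_) _
  · simp only [mem_product, mem_grid] at hx
    simp only [replicateUnion, Multiset.mem_union, Multiset.mem_replicate] at hi
    omega
  · simp only [mem_product, mem_grid] at hx
    rw [sum_replicateUnion]
    split_ifs <;> apply Nat.pos_of_ne_zero <;> simp <;> omega

end Nat.Partition

lemma two_mul_Nfun_add_mul_card (n : ℕ) :
    2 * Nfun n + n * Fintype.card n.Partition =
      ∑ s ∈ Icc 1 n, (∑ x ∈ pairFiber n s, min x.1.1 x.2.1) * Fintype.card (n - s).Partition := by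
  rw [← Nat.Partition.sum_sum_map_sum_map_parts]
  simp [Nat.Partition.sum_map_sum_map_min_parts, Nfun, sum_add_distrib, mul_sum, mul_comm]

lemma mul_self_mul_card (n : ℕ) :
    n * n * Fintype.card n.Partition =
      ∑ s ∈ Icc 1 n, (∑ x ∈ pairFiber n s, x.1.1 * x.2.1) * Fintype.card (n - s).Partition := by
  rw [← Nat.Partition.sum_sum_map_sum_map_parts n (· * ·)]
  simp [Nat.Partition.sum_map_sum_map_mul_parts, mul_comm]

lemma mul_card (n : ℕ) :
    n * Fintype.card n.Partition =
      ∑ s ∈ Icc 1 n, (∑ p ∈ singleFiber n s, p.1) * Fintype.card (n - s).Partition := by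
  rw [← Nat.Partition.sum_sum_map_parts n fun a => a]
  simp [Nat.Partition.parts_sum, mul_comm]

lemma le_sum_singleFiber {n s : ℕ} (hs : 1 ≤ s) (hsn : s ≤ n) :
    s ≤ ∑ p ∈ singleFiber n s, p.1 :=
  single_le_sum (f := Prod.fst) (fun _ _ => Nat.zero_le _)
    (show (s, 1) ∈ singleFiber n s from
      mem_singleFiber.mpr ⟨mem_grid.mpr ⟨⟨hs, hsn⟩, le_rfl, hs.trans hsn⟩, one_mul s⟩)

lemma add_one_le_sum_singleFiber {n s : ℕ} (hs : 2 ≤ s) (hsn : s ≤ n) :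
    s + 1 ≤ ∑ p ∈ singleFiber n s, p.1 :=
  calc s + 1 = ∑ p ∈ {(s, 1), (1, s)}, p.1 := by rw [sum_pair (by simp; omega)]
    _ ≤ _ := sum_le_sum_of_subset fun p hp => by
      rw [mem_insert, mem_singleton] at hp
      rcases hp with rfl | rfl <;> simp only [mem_singleFiber, mem_grid] <;> omega

lemma card_filter_pairFiber_diag (n s : ℕ) {a : ℕ} (ha : 0 < a) :
    #{x ∈ pairFiber n s | (x.1.1, x.2.1) = (a, a)} ≤ 2 * (s / a) - 1 := by
  set m := s / a with hm
  calc _ ≤ #(Icc 1 m ×ˢ {m} ∪ {m} ×ˢ Icc 1 (m - 1)) := by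
        refine card_le_card_of_injOn (fun x => (x.1.2, x.2.2)) (fun x hx => ?_)
          (fun x hx y hy hxy => ?_)
        · simp only [mem_coe, mem_filter, mem_pairFiber, mem_grid, Prod.mk.injEq] at hx
          obtain ⟨⟨⟨-, hj, -⟩, ⟨-, hk, -⟩, hs⟩, hxa, hxb⟩ := hx
          rw [hxa, hxb, if_pos rfl] at hs
          have : max x.1.2 x.2.2 = m := by rw [hm, ← hs, Nat.mul_div_cancel _ ha]
          simp only [mem_coe, mem_union, mem_product, mem_Icc, mem_singleton]
          omega
        · simp only [mem_coe, mem_filter, Prod.mk.injEq] at hx hy hxy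
          ext <;> simp_all
    _ ≤ m + (m - 1) := (card_union_le _ _).trans (by simp)
    _ = 2 * m - 1 := by omega

lemma card_filter_pairFiber_of_ne (n s : ℕ) {a b : ℕ} (ha : 0 < a) (hab : a ≠ b) :
    #{x ∈ pairFiber n s | (x.1.1, x.2.1) = (a, b)} ≤ (s - a) / b := by
  calc _ ≤ #(Icc 1 ((s - a) / b)) := by
        refine card_le_card_of_injOn (fun x => x.2.2) (fun x hx => ?_)
          (fun x hx y hy hxy => ?_)
        · simp only [mem_coe, mem_filter, mem_pairFiber, mem_grid, Prod.mk.injEq] at hx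
          obtain ⟨⟨⟨-, hj, -⟩, ⟨⟨hb, -⟩, hk, -⟩, hs⟩, rfl, rfl⟩ := hx
          rw [if_neg hab] at hs
          have : x.1.1 ≤ x.1.2 * x.1.1 := Nat.le_mul_of_pos_left _ hj
          simp only [mem_coe, mem_Icc]
          exact ⟨hk, (Nat.le_div_iff_mul_le hb).mpr (by omega)⟩
        · simp only [mem_coe, mem_filter, mem_pairFiber, Prod.mk.injEq] at hx hy hxy
          obtain ⟨⟨-, -, hsx⟩, rfl, rfl⟩ := hx
          obtain ⟨⟨-, -, hsy⟩, hya, hyb⟩ := hy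
          rw [if_neg hab] at hsx
          rw [hya, hyb, if_neg hab, ← hxy] at hsy
          have hj : x.1.2 = y.1.2 := Nat.eq_of_mul_eq_mul_right ha (by omega)
          ext <;> simp_all
    _ = (s - a) / b := by simp

lemma card_filter_pairFiber_swap (n s a b : ℕ) :
    #{x ∈ pairFiber n s | (x.1.1, x.2.1) = (a, b)} =
      #{x ∈ pairFiber n s | (x.1.1, x.2.1) = (b, a)} := by
  refine card_nbij' Prod.swap Prod.swap (fun x hx => ?_) (fun x hx => ?_) (fun _ _ => rfl)
    (fun _ _ => rfl)
  all_goals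
    simp only [mem_coe, mem_filter, pairFiber, mem_product, replicateUnion_swap, Prod.fst_swap,
      Prod.snd_swap, Prod.mk.injEq] at hx ⊢
    tauto

/-- The positive part of `3 * min a b - a * b` for `a, b ≥ 1`. -/
def minExcess (c : ℕ × ℕ) : ℕ :=
  2 * (if c = (1, 1) then 1 else 0) + (if c = (1, 2) then 1 else 0) +
    (if c = (2, 1) then 1 else 0) + 2 * (if c = (2, 2) then 1 else 0)

lemma three_mul_min_le (a b : ℕ) (ha : 1 ≤ a) (hb : 1 ≤ b) :
    3 * min a b ≤ a * b + minExcess (a, b) := by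
  by_cases hmax : 3 ≤ max a b
  · calc 3 * min a b ≤ max a b * min a b := Nat.mul_le_mul_right _ hmax
      _ = a * b := by rw [mul_comm, min_mul_max]
      _ ≤ _ := Nat.le_add_right _ _
  · have ha2 : a ≤ 2 := by omega
    have hb2 : b ≤ 2 := by omega
    interval_cases a <;> interval_cases b <;> simp [minExcess]

lemma sum_minExcess_pairFiber_le (n s : ℕ) :
    ∑ x ∈ pairFiber n s, minExcess (x.1.1, x.2.1) ≤ 7 * s - 5 := by
  have h11 := card_filter_pairFiber_diag n s one_pos
  have h22 := card_filter_pairFiber_diag n s two_pos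
  have h12 := card_filter_pairFiber_of_ne n s one_pos (b := 2) (by decide)
  have h21 := card_filter_pairFiber_swap n s 2 1
  simp only [minExcess, sum_add_distrib, ← mul_sum, sum_boole, Nat.cast_id]
  omega

lemma three_mul_sum_min_le (n s : ℕ) (hs : 1 ≤ s) (hsn : s ≤ n) :
    3 * ∑ x ∈ pairFiber n s, min x.1.1 x.2.1 ≤
      ∑ x ∈ pairFiber n s, x.1.1 * x.2.1 + 4 * ∑ p ∈ singleFiber n s, p.1 := by
  have hx₀ : ((s, 1), (s, 1)) ∈ pairFiber n s := by
    simp only [mem_pairFiber, mem_grid, if_true, max_self, one_mul, and_true]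
    omega
  rw [← add_sum_erase _ _ hx₀, ← add_sum_erase _ _ hx₀]
  set F := (pairFiber n s).erase ((s, 1), (s, 1))
  have hF : 3 * ∑ x ∈ F, min x.1.1 x.2.1 ≤
      ∑ x ∈ F, x.1.1 * x.2.1 + ∑ x ∈ pairFiber n s, minExcess (x.1.1, x.2.1) :=
    calc _ = ∑ x ∈ F, 3 * min x.1.1 x.2.1 := mul_sum _ _ _
      _ ≤ ∑ x ∈ F, (x.1.1 * x.2.1 + minExcess (x.1.1, x.2.1)) := sum_le_sum fun x hx => by
          obtain ⟨h1, h2, -⟩ := mem_pairFiber.mp (mem_of_mem_erase hx)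
          exact three_mul_min_le _ _ (mem_grid.mp h1).1.1 (mem_grid.mp h2).1.1
      _ ≤ _ := by
        rw [sum_add_distrib]
        exact Nat.add_le_add_left (sum_le_sum_of_subset (erase_subset _ _)) _
  have hE := sum_minExcess_pairFiber_le n s
  have hu := le_sum_singleFiber hs hsn
  rcases (show s = 1 ∨ 2 ≤ s by omega) with rfl | hs2
  · simp only [min_self, mul_one] at hF hE ⊢
    omega
  · have hu2 := add_one_le_sum_singleFiber hs2 hsn
    have hsq : 6 * s ≤ s * s + 9 := by nlinarith [sq_nonneg ((s : ℤ) - 3)]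
    simp only [min_self] at hF ⊢
    omega

theorem Nfun_le_general (n : ℕ) :
    6 * Nfun n ≤ n * (n + 1) * Fintype.card (Nat.Partition n) := by
  have key : 3 * (2 * Nfun n + n * Fintype.card n.Partition) ≤
      n * n * Fintype.card n.Partition + 4 * (n * Fintype.card n.Partition) := by
    rw [two_mul_Nfun_add_mul_card, mul_self_mul_card, mul_card, mul_sum, mul_sum,
      ← sum_add_distrib]
    refine sum_le_sum fun s hs => ?_
    have := Nat.mul_le_mul_right (Fintype.card (n - s).Partition)
      (three_mul_sum_min_le n s (mem_Icc.mp hs).1 (mem_Icc.mp hs).2)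
    linarith
  linarith

theorem Nfun_le (n : ℕ) (hn : 1 ≤ n) :
    6 * Nfun n ≤ n * (n + 1) * Fintype.card (Nat.Partition n) :=
  Nfun_le_general n
end

section
/- Let μ = (μ_1 ≥ μ_2 ≥ … ≥ μ_l) be a partition of n with l ≥ 2 parts, and assume μ ≠ (n−1, 1). Then C(n,2) ≥ Σ_{i=1}^{l} C(μ_i + 1, 2), where C(a,2) = a(a−1)/2 is the binomial coefficient. -/
lemma two_mul_choose_two (n : ℕ) : 2 * n.choose 2 = n * (n - 1) := by
  induction n with
  | zero => simp
  | succ k ih =>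
    rw [Nat.choose_succ_succ, Nat.choose_one_right]
    simp only [Nat.succ_sub_one]
    cases k with
    | zero => simp
    | succ j => rw [mul_add, ih]; simp [Nat.succ_sub_one]; ring

lemma sum_map_le_aux (t : Multiset ℕ) :
    (t.map (fun a => (a + 1).choose 2)).sum ≤ (t.sum + 1).choose 2 := by
  induction t using Multiset.induction with
  | empty => simp
  | cons a t ih =>
    simp only [Multiset.map_cons, Multiset.sum_cons]
    have key : (a + 1).choose 2 + (t.sum + 1).choose 2 ≤ (a + t.sum + 1).choose 2 := by
      have h1 := two_mul_choose_two (a + 1)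
      have h2 := two_mul_choose_two (t.sum + 1)
      have h3 := two_mul_choose_two (a + t.sum + 1)
      simp only [Nat.succ_sub_one] at h1 h2 h3
      nlinarith [Nat.zero_le (a * t.sum)]
    calc (a + 1).choose 2 + (t.map (fun a => (a + 1).choose 2)).sum
        ≤ (a + 1).choose 2 + (t.sum + 1).choose 2 := by gcongr
      _ ≤ (a + t.sum + 1).choose 2 := key

/-- If `μ ⊢ n` has at least two parts and `μ ≠ (n-1, 1)`, then
`C(n,2) ≥ Σ_i C(μ_i + 1, 2)`. -/
theorem sum_choose_le (n : ℕ) (μ : Nat.Partition n) (hl : 2 ≤ Multiset.card μ.parts)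
    (hne : μ.parts ≠ {n - 1, 1}) :
    (μ.parts.map (fun a => (a + 1).choose 2)).sum ≤ n.choose 2 := by
  have hsum : μ.parts.sum = n := μ.parts_sum
  have hpos : ∀ x ∈ μ.parts, 0 < x := fun x hx => μ.parts_pos hx
  by_cases hbig : ∃ a ∈ μ.parts, 2 ≤ a
  · obtain ⟨a, ha, ha2⟩ := hbig
    obtain ⟨t, ht⟩ := Multiset.exists_cons_of_mem ha
    rw [ht] at hsum hne hl ⊢
    replace hpos : ∀ x ∈ a ::ₘ t, 0 < x := by rw [← ht]; exact hpos
    rw [Multiset.card_cons] at hl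
    set m := t.sum with hm
    have hn : n = a + m := by rw [← hsum]; simp [hm]
    have htcard : 1 ≤ Multiset.card t := by
      simp at hl; omega
    have hm1 : 1 ≤ m := by
      obtain ⟨b, hb⟩ := Multiset.card_pos_iff_exists_mem.mp (show 0 < Multiset.card t by omega)
      have hb1 : 1 ≤ b := hpos b (Multiset.mem_cons_of_mem hb)
      have := Multiset.single_le_sum (fun x _ => Nat.zero_le x) b hb
      omega
    have hm2 : 2 ≤ m := by
      by_contra h
      have hm1' : m = 1 := by omega
      -- t = {1}
      obtain ⟨b, hb⟩ := Multiset.card_pos_iff_exists_mem.mp (show 0 < Multiset.card t by omega)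
      have hb1 : 1 ≤ b := hpos b (Multiset.mem_cons_of_mem hb)
      have hble := Multiset.single_le_sum (fun x _ => Nat.zero_le x) b hb
      have hbeq : b = 1 := by omega
      obtain ⟨t', rfl⟩ := Multiset.exists_cons_of_mem hb
      have ht'0 : t' = 0 := by
        by_contra h0
        obtain ⟨c, hc⟩ := Multiset.card_pos_iff_exists_mem.mp
          (Multiset.card_pos.mpr h0)
        have hc1 : 1 ≤ c := hpos c (Multiset.mem_cons_of_mem (Multiset.mem_cons_of_mem hc))
        have := Multiset.single_le_sum (fun x _ => Nat.zero_le x) c hc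
        have : (b ::ₘ t').sum = b + t'.sum := Multiset.sum_cons b t'
        omega
      subst ht'0
      apply hne
      have hna : a = n - 1 := by
        omega
      subst hbeq
      rw [hna]
      rfl
    -- main computation
    have hstep : ((a ::ₘ t).map (fun a => (a + 1).choose 2)).sum
        ≤ (a + 1).choose 2 + (m + 1).choose 2 := by
      simp only [Multiset.map_cons, Multiset.sum_cons]
      gcongr
      exact sum_map_le_aux t
    refine hstep.trans ?_
    have h1 := two_mul_choose_two (a + 1)
    have h2 := two_mul_choose_two (m + 1)
    have h3 : 2 * n.choose 2 = n * (n - 1) := two_mul_choose_two n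
    simp only [Nat.succ_sub_one] at h1 h2
    obtain ⟨i, rfl⟩ : ∃ i, a = i + 2 := ⟨a - 2, by omega⟩
    obtain ⟨j, hj⟩ : ∃ j, m = j + 2 := ⟨m - 2, by omega⟩
    rw [hj] at h2
    have h3' : 2 * n.choose 2 = (i + j + 4) * (i + j + 3) := by
      rw [h3, hn, hj]
      have hx : i + 2 + (j + 2) - 1 = i + j + 3 := by omega
      rw [hx]
      ring
    rw [hj]
    nlinarith [h1, h2, h3', Nat.zero_le (i * j)]
  · -- all parts equal 1
    push_neg at hbig
    have hall : ∀ x ∈ μ.parts, x = 1 := by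
      intro x hx
      have := hpos x hx
      have := hbig x hx
      omega
    have hrep : μ.parts = Multiset.replicate (Multiset.card μ.parts) 1 :=
      Multiset.eq_replicate_card.mpr hall
    have hcard : Multiset.card μ.parts = n := by
      have : μ.parts.sum = Multiset.card μ.parts := by
        rw [hrep]; simp
      omega
    have hn3 : 3 ≤ n := by
      rcases Nat.lt_or_ge n 3 with h | h
      · exfalso
        have hn2 : n = 2 := by omega
        apply hne
        rw [hrep, hcard, hn2]
        rfl
      · exact h
    rw [hrep]
    simp only [Multiset.map_replicate, Multiset.sum_replicate, smul_eq_mul]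
    have : Nat.choose 2 2 = 1 := by decide
    rw [this, mul_one, hcard]
    obtain ⟨k, rfl⟩ : ∃ k, n = k + 1 := ⟨n - 1, by omega⟩
    have h3 := two_mul_choose_two (k + 1)
    simp only [Nat.succ_sub_one] at h3
    nlinarith
end

section
/- For every partition λ of n and every variable value q (an integer ≥ 2, or as polynomials in q), the product Π_{i≥1} Π_{j=1}^{m_i(λ)} (q^j − 1) divides the hook product Π_{x∈λ} (q^{h(x)} − 1), where m_i(λ) is the multiplicity of part i in λ and h(x) is the hook length of λ at the cell x. -/
/-- The hook length of a Young diagram at the cell `x = (i, j)`: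
`(rowLen i - j) + (colLen j - i) - 1`. -/
def YoungDiagram.hookLength (μ : YoungDiagram) (x : ℕ × ℕ) : ℕ :=
  μ.rowLen x.1 - x.2 + (μ.colLen x.2 - x.1) - 1

/-- `m_i(λ)`, the number of rows of the Young diagram of length `i`. -/
def YoungDiagram.multiplicity (μ : YoungDiagram) (i : ℕ) : ℕ :=
  ((Finset.range (μ.colLen 0)).filter (fun r => μ.rowLen r = i)).card

lemma YoungDiagram.lt_rowLen_iff' (μ : YoungDiagram) (r j : ℕ) :
    j < μ.rowLen r ↔ r < μ.colLen j := by
  rw [← μ.mem_iff_lt_rowLen, μ.mem_iff_lt_colLen]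

lemma YoungDiagram.rowLen_eq_iff' (μ : YoungDiagram) (r i : ℕ) (hi : 1 ≤ i) :
    μ.rowLen r = i ↔ μ.colLen i ≤ r ∧ r < μ.colLen (i - 1) := by
  have h1 := μ.lt_rowLen_iff' r i
  have h2 := μ.lt_rowLen_iff' r (i - 1)
  omega

lemma YoungDiagram.mult_eq' (μ : YoungDiagram) (i : ℕ) (hi : 1 ≤ i) :
    μ.multiplicity i = μ.colLen (i - 1) - μ.colLen i := by
  have hmono : μ.colLen (i - 1) ≤ μ.colLen 0 := μ.colLen_anti 0 (i - 1) (Nat.zero_le _)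
  have : ((Finset.range (μ.colLen 0)).filter (fun r => μ.rowLen r = i))
      = Finset.Ico (μ.colLen i) (μ.colLen (i - 1)) := by
    ext r
    simp only [Finset.mem_filter, Finset.mem_range, Finset.mem_Ico,
      μ.rowLen_eq_iff' r i hi]
    omega
  rw [YoungDiagram.multiplicity, this, Nat.card_Ico]

/-- For any partition (Young diagram) `λ` and integer `q ≥ 2`,
`Π_i ψ_{m_i(λ)}(q)` divides the hook product `Π_{x∈λ}(q^{h(x)} - 1)`. -/
theorem psi_prod_dvd_hook_prod (μ : YoungDiagram) (q : ℤ) (hq : 2 ≤ q) :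
    (∏ i ∈ Finset.range (μ.rowLen 0 + 1),
        ∏ j ∈ Finset.range (μ.multiplicity i), (q ^ (j + 1) - 1))
      ∣ ∏ x ∈ μ.cells, (q ^ μ.hookLength x - 1) := by
  classical
  set S := (Finset.range (μ.rowLen 0 + 1)).sigma (fun i => Finset.range (μ.multiplicity i))
    with hS
  set F : (Σ _ : ℕ, ℕ) → ℕ × ℕ := fun x => (μ.colLen (x.1 - 1) - 1 - x.2, x.1 - 1) with hF
  have hmem : ∀ i j, (⟨i, j⟩ : Σ _ : ℕ, ℕ) ∈ S →
      1 ≤ i ∧ j + 1 ≤ μ.colLen (i - 1) - μ.colLen i := by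
    intro i j hx
    simp only [hS, Finset.mem_sigma, Finset.mem_range] at hx
    have hi : 1 ≤ i := by
      by_contra h
      have hi0 : i = 0 := by omega
      subst hi0
      have : μ.multiplicity 0 = 0 := by
        rw [YoungDiagram.multiplicity, Finset.card_eq_zero, Finset.filter_eq_empty_iff]
        intro r hr
        simp only [Finset.mem_range] at hr
        have := (μ.lt_rowLen_iff' r 0).mpr hr
        omega
      omega
    have := μ.mult_eq' i hi
    exact ⟨hi, by omega⟩
  have hrow : ∀ i j, (⟨i, j⟩ : Σ _ : ℕ, ℕ) ∈ S →
      μ.rowLen (μ.colLen (i - 1) - 1 - j) = i := by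
    intro i j hx
    obtain ⟨hi, hj⟩ := hmem i j hx
    rw [μ.rowLen_eq_iff' _ i hi]
    omega
  have hcell : ∀ x ∈ S, F x ∈ μ.cells := by
    rintro ⟨i, j⟩ hx
    obtain ⟨hi, hj⟩ := hmem i j hx
    have hr := hrow i j hx
    show (μ.colLen (i - 1) - 1 - j, i - 1) ∈ μ.cells
    rw [YoungDiagram.mem_cells, μ.mem_iff_lt_rowLen]
    omega
  have hhook : ∀ x ∈ S, μ.hookLength (F x) = x.2 + 1 := by
    rintro ⟨i, j⟩ hx
    obtain ⟨hi, hj⟩ := hmem i j hx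
    have hr := hrow i j hx
    show μ.hookLength (μ.colLen (i - 1) - 1 - j, i - 1) = j + 1
    rw [YoungDiagram.hookLength]
    simp only
    omega
  have hinj : Set.InjOn F S := by
    rintro ⟨i1, j1⟩ h1 ⟨i2, j2⟩ h2 heq
    obtain ⟨hi1, hj1⟩ := hmem i1 j1 h1
    obtain ⟨hi2, hj2⟩ := hmem i2 j2 h2
    have heq' : (μ.colLen (i1 - 1) - 1 - j1, i1 - 1)
        = (μ.colLen (i2 - 1) - 1 - j2, i2 - 1) := heq
    rw [Prod.mk.injEq] at heq'
    obtain ⟨ha, hb⟩ := heq'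
    have hii : i1 = i2 := by omega
    subst hii
    have : j1 = j2 := by omega
    simp [this]
  calc (∏ i ∈ Finset.range (μ.rowLen 0 + 1),
        ∏ j ∈ Finset.range (μ.multiplicity i), (q ^ (j + 1) - 1))
      = ∏ x ∈ S, (q ^ (x.2 + 1) - 1) := by rw [hS, Finset.prod_sigma]
    _ = ∏ x ∈ S, (q ^ μ.hookLength (F x) - 1) := by
        apply Finset.prod_congr rfl
        intro x hx
        rw [hhook x hx]
    _ = ∏ y ∈ S.image F, (q ^ μ.hookLength y - 1) :=
        (Finset.prod_image (f := fun y => q ^ μ.hookLength y - 1)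
          (fun a ha b hb => hinj ha hb)).symm
    _ ∣ ∏ x ∈ μ.cells, (q ^ μ.hookLength x - 1) := by
        apply Finset.prod_dvd_prod_of_subset
        intro y hy
        obtain ⟨x, hx, rfl⟩ := Finset.mem_image.mp hy
        exact hcell x hx
end
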